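/- arXiv:2108.03022 — 2 statements merged into one kernel-verified Lean document; each statement's English description precedes it below -/
import Mathlib

section
/- Let F be a 3-CNF formula over a finite variable set V and let Π_F be the associated ELP. Then the map M ↦ {v : v ∈ M} ∪ {¬v : v ∈ V \ M} is a bijection from the models of F onto the plausible WVIs of Π_F over V; in particular, the number of WVIs I over V with I ⊨_p Π_F equals the number of models of F. (This is the correctness of the reduction used in the hardness part of the Proposition stating that counting plausible WVIs of an ELP is #P-complete.) -/
/- Formalization of epistemic logic programs (ELPs), following the paper
   "Utilizing Treewidth for Quantitative Reasoning on Epistemic Logic Programs". -/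

namespace ELP

variable {α : Type}

/-- A literal over atoms `α`: an atom together with a polarity
    (`true` = the atom itself, `false` = its classical negation `¬a`). -/
abbrev Lit (α : Type) := α × Bool

/-- A rule of a plain (disjunctive) logic program:
    `a₁ ∨ … ∨ a_k ← a_{k+1}, …, a_m, ¬a_{m+1}, …, ¬a_n`. -/
structure PRule (α : Type) where
  head : Set α
  bpos : Set α
  bneg : Set α

/-- An interpretation `I` satisfies a rule `r` if `(H_r ∪ B⁻_r) ∩ I ≠ ∅` or `B⁺_r ⊄ I`. -/
def PRule.SatBy (r : PRule α) (I : Set α) : Prop :=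
  ((r.head ∪ r.bneg) ∩ I).Nonempty ∨ ¬ r.bpos ⊆ I

/-- `I` is a model of the program `P`. -/
def IsModelOf (I : Set α) (P : Set (PRule α)) : Prop := ∀ r ∈ P, r.SatBy I

/-- The Gelfond–Lifschitz reduct `P^I`: drop rules whose negative body intersects `I`,
    and delete the negative bodies of the remaining rules. -/
def glReduct (P : Set (PRule α)) (I : Set α) : Set (PRule α) :=
  { r' | ∃ r ∈ P, r.bneg ∩ I = ∅ ∧ r' = ⟨r.head, r.bpos, ∅⟩ }

/-- `I` is an answer set of `P` if it is a ⊆-minimal model of the GL reduct `P^I`. -/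
def IsAnswerSet (P : Set (PRule α)) (I : Set α) : Prop :=
  IsModelOf I (glReduct P I) ∧ ∀ J ⊆ I, IsModelOf J (glReduct P I) → J = I

/-- `AS(P)`, the set of answer sets of `P`. -/
def answerSets (P : Set (PRule α)) : Set (Set α) := { I | IsAnswerSet P I }

/-- A rule of an epistemic logic program (ELP):
    `a₁ ∨ … ∨ a_k ← ℓ_{k+1}, …, ℓ_m, ξ_{m+1}, …, ξ_j, ¬ξ_{j+1}, …, ¬ξ_n`,
    where the objective literals `ℓ_i` are split into positive (`bpos`) and negative
    (`bneg`) body atoms, `epos` are the epistemic literals `not ℓ` occurring positively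
    and `eneg` those occurring under classical negation `¬`. -/
structure ERule (α : Type) where
  head : Set α
  bpos : Set α
  bneg : Set α
  epos : Set (Lit α)
  eneg : Set (Lit α)

/-- `ex-ats(r)`: the atoms occurring in epistemic literals of `r`. -/
def ERule.exats (r : ERule α) : Set α := Prod.fst '' (r.epos ∪ r.eneg)

/-- `ats(r)`: all atoms occurring in `r`. -/
def ERule.ats (r : ERule α) : Set α := r.head ∪ r.bpos ∪ r.bneg ∪ r.exats

/-- `ax-ats(r) = ats(r) \ ex-ats(r)`: the non-epistemic atoms of `r`. -/
def ERule.axats (r : ERule α) : Set α := r.ats \ r.exats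

/-- A rule is purely-epistemic if `ax-ats(r) = ∅`. -/
def ERule.PurelyEpistemic (r : ERule α) : Prop := r.axats = ∅

/-- Well-formedness of an ELP rule, reflecting that in
    `a₁ ∨ … ∨ a_k ← ℓ_{k+1}, …, ℓ_m, ξ_{m+1}, …, ξ_n` the atoms `a₁, …, a_n`
    are distinct (in particular the head/body atoms are disjoint from the
    epistemic atoms) and that rules are finite objects. -/
def ERule.Wf (r : ERule α) : Prop :=
  (r.head ∪ r.bpos ∪ r.bneg) ∩ r.exats = ∅ ∧
  r.head ∩ r.bpos = ∅ ∧ r.head ∩ r.bneg = ∅ ∧ r.bpos ∩ r.bneg = ∅ ∧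
  r.ats.Finite

/-- `ex-ats(Π)`. -/
def elpExats (P : Set (ERule α)) : Set α := ⋃ r ∈ P, r.exats

/-- `ats(Π)`. -/
def elpAts (P : Set (ERule α)) : Set α := ⋃ r ∈ P, r.ats

/-- The purely-epistemic part `Π_pe = {r ∈ Π : ax-ats(r) = ∅}` of `Π`. -/
def peParts (P : Set (ERule α)) : Set (ERule α) := { r ∈ P | r.PurelyEpistemic }

/-- All rules of the ELP are well-formed. -/
def WfELP (P : Set (ERule α)) : Prop := ∀ r ∈ P, r.Wf

/-- A world view interpretation (WVI) over a set `A` of atoms: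
    a consistent set of literals over `A`. -/
def IsWVI (A : Set α) (I : Set (Lit α)) : Prop :=
  (∀ l ∈ I, l.1 ∈ A) ∧ ∀ a : α, ¬ ((a, true) ∈ I ∧ (a, false) ∈ I)

/-- The restriction `I|X` of a set of literals `I` to literals over atoms in `X`. -/
def restrict (I : Set (Lit α)) (X : Set α) : Set (Lit α) := { l ∈ I | l.1 ∈ X }

/-- The epistemic reduct `Π^I`: each epistemic literal `not ℓ` is replaced by `⊥`
    if `ℓ ∈ I` and by `⊤` otherwise.  A rule survives (with its epistemic literals
    deleted) iff no body occurrence becomes `⊥`, i.e. iff `ℓ ∉ I` for every positive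
    epistemic literal `not ℓ` and `ℓ ∈ I` for every epistemic literal `not ℓ`
    occurring under classical negation `¬`. -/
def ereduct (P : Set (ERule α)) (I : Set (Lit α)) : Set (PRule α) :=
  { r' | ∃ r ∈ P, (∀ l ∈ r.epos, l ∉ I) ∧ (∀ l ∈ r.eneg, l ∈ I) ∧
         r' = ⟨r.head, r.bpos, r.bneg⟩ }

/-- `I ⊨_p Π`: the WVI `I` is plausible for `Π`, i.e. `AS(Π_pe^I) ≠ ∅`. -/
def PlausibleFor (P : Set (ERule α)) (I : Set (Lit α)) : Prop :=
  (answerSets (ereduct (peParts P) I)).Nonempty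

/-- Compatibility of a WVI `I` over `A` with a set `Js` of interpretations. -/
def Compatible (A : Set α) (I : Set (Lit α)) (Js : Set (Set α)) : Prop :=
  Js.Nonempty ∧
  (∀ a : α, (a, true) ∈ I → ∀ J ∈ Js, a ∈ J) ∧
  (∀ a : α, (a, false) ∈ I → ∀ J ∈ Js, a ∉ J) ∧
  (∀ a ∈ A, (a, true) ∉ I → (a, false) ∉ I →
    (∃ J ∈ Js, a ∈ J) ∧ ∃ J' ∈ Js, a ∉ J')

/-- `W` is a world view of `Π`: a WVI over `ats(Π)` compatible with `AS(Π^W)`. -/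
def IsWorldView (P : Set (ERule α)) (W : Set (Lit α)) : Prop :=
  IsWVI (elpAts P) W ∧ Compatible (elpAts P) W (answerSets (ereduct P W))

/-- A 3-clause is a disjunction of three literals. -/
abbrev Clause (α : Type) := Lit α × Lit α × Lit α

/-- The atoms of a clause. -/
def clauseAtoms (c : Clause α) : Set α := {c.1.1, c.2.1.1, c.2.2.1}

/-- A literal is true under the assignment `M` (the set of true variables). -/
def LitTrue (M : Set α) (l : Lit α) : Prop := if l.2 then l.1 ∈ M else l.1 ∉ M

/-- `M ⊆ V` is a model of the 3-CNF `F`: every clause contains a true literal. -/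
def IsCnfModel (V : Set α) (F : Set (Clause α)) (M : Set α) : Prop :=
  M ⊆ V ∧ ∀ c ∈ F, LitTrue M c.1 ∨ LitTrue M c.2.1 ∨ LitTrue M c.2.2

/-- The ELP `Π_F` associated with a 3-CNF `F` over variables `V`:
    a rule `← not v, not ¬v` for every `v ∈ V` and a rule
    `← not ℓ₁, not ℓ₂, not ℓ₃` for every clause `ℓ₁ ∨ ℓ₂ ∨ ℓ₃` of `F`. -/
def cnfELP (V : Set α) (F : Set (Clause α)) : Set (ERule α) :=
  { r | ∃ v ∈ V, r = ⟨∅, ∅, ∅, {(v, true), (v, false)}, ∅⟩ } ∪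
  { r | ∃ c ∈ F, r = ⟨∅, ∅, ∅, {c.1, c.2.1, c.2.2}, ∅⟩ }

/-- The WVI `I_M = {v : v ∈ M} ∪ {¬v : v ∈ V \ M}` induced by an assignment `M`. -/
def assignWVI (V M : Set α) : Set (Lit α) :=
  { l | (l.2 = true ∧ l.1 ∈ M) ∨ (l.2 = false ∧ l.1 ∈ V \ M) }

/- Every rule of `Π_F` is a constraint whose epistemic reduct is either dropped or the
   unsatisfiable constraint `⊥ ←`, so `I ⊨_p Π_F` holds exactly when each rule is dropped,
   i.e. `I` contains `v` or `¬v` for every variable and a literal of every clause.  A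
   consistent `I` over `V` containing `v` or `¬v` for every `v` is `I_M` for `M` its set of
   positive atoms, and `I_M` contains a literal of a clause exactly when `M` satisfies it. -/

theorem mem_answerSets_empty : (∅ : Set α) ∈ answerSets (∅ : Set (PRule α)) :=
  ⟨fun _ ⟨_, h, _⟩ => h.elim, fun _ hJ _ => Set.subset_empty_iff.mp hJ⟩

theorem answerSets_eq_empty_of_bot_mem {P : Set (PRule α)} (h : ⟨∅, ∅, ∅⟩ ∈ P) :
    answerSets P = ∅ := by
  refine Set.eq_empty_of_forall_notMem fun I ⟨hI, _⟩ => ?_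
  simpa [PRule.SatBy] using hI _ ⟨_, h, Set.empty_inter I, rfl⟩

theorem answerSets_nonempty_iff_of_forall_eq_bot {P : Set (PRule α)}
    (hP : ∀ r ∈ P, r = ⟨∅, ∅, ∅⟩) : (answerSets P).Nonempty ↔ P = ∅ := by
  refine ⟨fun h => Set.eq_empty_of_forall_notMem fun r hr => ?_,
    fun h => h ▸ ⟨_, mem_answerSets_empty⟩⟩
  rw [answerSets_eq_empty_of_bot_mem (hP r hr ▸ hr)] at h
  exact Set.not_nonempty_empty h

theorem ereduct_eq_empty_iff (P : Set (ERule α)) (I : Set (Lit α)) :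
    ereduct P I = ∅ ↔ ∀ r ∈ P, (∃ l ∈ r.epos, l ∈ I) ∨ ∃ l ∈ r.eneg, l ∉ I := by
  simp only [Set.eq_empty_iff_forall_notMem, ereduct, Set.mem_ofPred_eq, not_exists, not_and]
  refine ⟨fun h r hr => ?_, fun h _ r hr hpos hneg _ => ?_⟩
  · by_contra! h'
    exact h _ r hr h'.1 h'.2 rfl
  · obtain ⟨l, hl, hlI⟩ | ⟨l, hl, hlI⟩ := h r hr
    exacts [hpos l hl hlI, hlI (hneg l hl)]

theorem peParts_cnfELP (V : Set α) (F : Set (Clause α)) :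
    peParts (cnfELP V F) = cnfELP V F := by
  refine Set.sep_eq_self_iff_mem_true.mpr ?_
  rintro r (⟨v, -, rfl⟩ | ⟨c, -, rfl⟩) <;>
    simp [ERule.PurelyEpistemic, ERule.axats, ERule.ats]

theorem eq_bot_of_mem_ereduct_cnfELP {V : Set α} {F : Set (Clause α)} {I : Set (Lit α)}
    {r : PRule α} (h : r ∈ ereduct (cnfELP V F) I) : r = ⟨∅, ∅, ∅⟩ := by
  obtain ⟨_, ⟨v, -, rfl⟩ | ⟨c, -, rfl⟩, -, -, rfl⟩ := h <;> rfl

theorem ereduct_cnfELP_eq_empty_iff (V : Set α) (F : Set (Clause α)) (I : Set (Lit α)) :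
    ereduct (cnfELP V F) I = ∅ ↔
      (∀ v ∈ V, (v, true) ∈ I ∨ (v, false) ∈ I) ∧
      (∀ c ∈ F, c.1 ∈ I ∨ c.2.1 ∈ I ∨ c.2.2 ∈ I) := by
  rw [ereduct_eq_empty_iff]
  simp only [cnfELP, Set.mem_union, or_imp, forall_and, Set.mem_ofPred_eq, forall_exists_index,
    and_imp, forall_comm (α := ERule α), forall_eq, Set.mem_insert_iff, Set.mem_singleton_iff,
    exists_eq_or_imp, exists_eq_left, Set.mem_empty_iff_false, false_and, exists_false, or_false]

theorem plausibleFor_cnfELP_iff (V : Set α) (F : Set (Clause α)) (I : Set (Lit α)) :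
    PlausibleFor (cnfELP V F) I ↔
      (∀ v ∈ V, (v, true) ∈ I ∨ (v, false) ∈ I) ∧
      (∀ c ∈ F, c.1 ∈ I ∨ c.2.1 ∈ I ∨ c.2.2 ∈ I) := by
  rw [PlausibleFor, peParts_cnfELP, ← ereduct_cnfELP_eq_empty_iff]
  exact answerSets_nonempty_iff_of_forall_eq_bot fun _ => eq_bot_of_mem_ereduct_cnfELP

@[simp]
theorem mk_true_mem_assignWVI {V M : Set α} {a : α} : (a, true) ∈ assignWVI V M ↔ a ∈ M := by
  simp [assignWVI]

@[simp]
theorem mk_false_mem_assignWVI {V M : Set α} {a : α} :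
    (a, false) ∈ assignWVI V M ↔ a ∈ V \ M := by
  simp [assignWVI]

theorem assignWVI_injective (V : Set α) : Function.Injective (assignWVI V) := fun M₁ M₂ h =>
  Set.ext fun a => by rw [← mk_true_mem_assignWVI (V := V), h, mk_true_mem_assignWVI]

theorem isWVI_assignWVI {V M : Set α} (hM : M ⊆ V) : IsWVI V (assignWVI V M) := by
  refine ⟨?_, fun a ⟨h₁, h₂⟩ => ?_⟩
  · rintro ⟨a, _ | _⟩ h <;> simp at h
    exacts [h.1, hM h]
  · simp_all

theorem assignWVI_total (V M : Set α) :
    ∀ v ∈ V, (v, true) ∈ assignWVI V M ∨ (v, false) ∈ assignWVI V M := by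
  intro v hv
  by_cases v ∈ M <;> simp_all

theorem litTrue_iff_mem_assignWVI {V M : Set α} {l : Lit α} (hl : l.1 ∈ V) :
    LitTrue M l ↔ l ∈ assignWVI V M := by
  obtain ⟨a, _ | _⟩ := l <;> simp_all [LitTrue]

theorem clause_sat_iff_mem_assignWVI {V M : Set α} {c : Clause α} (hc : clauseAtoms c ⊆ V) :
    (LitTrue M c.1 ∨ LitTrue M c.2.1 ∨ LitTrue M c.2.2) ↔
      (c.1 ∈ assignWVI V M ∨ c.2.1 ∈ assignWVI V M ∨ c.2.2 ∈ assignWVI V M) := by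
  simp only [clauseAtoms, Set.insert_subset_iff, Set.singleton_subset_iff] at hc
  rw [litTrue_iff_mem_assignWVI hc.1, litTrue_iff_mem_assignWVI hc.2.1,
    litTrue_iff_mem_assignWVI hc.2.2]

theorem assignWVI_eq_of_isWVI {V : Set α} {I : Set (Lit α)} (hI : IsWVI V I)
    (htot : ∀ v ∈ V, (v, true) ∈ I ∨ (v, false) ∈ I) :
    assignWVI V {a | (a, true) ∈ I} = I := by
  ext ⟨a, _ | _⟩
  · simp only [mk_false_mem_assignWVI, Set.mem_sdiff, Set.mem_ofPred_eq]
    exact ⟨fun ⟨ha, hna⟩ => (htot a ha).resolve_left hna,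
      fun h => ⟨hI.1 _ h, fun h' => hI.2 a ⟨h', h⟩⟩⟩
  · simp

theorem cnf_reduction_bijection_general (V : Set α)
    (F : Set (Clause α)) (hFV : ∀ c ∈ F, clauseAtoms c ⊆ V) :
    Set.BijOn (fun M => assignWVI V M)
      { M : Set α | IsCnfModel V F M }
      { I : Set (Lit α) | IsWVI V I ∧ PlausibleFor (cnfELP V F) I } ∧
    { I : Set (Lit α) | IsWVI V I ∧ PlausibleFor (cnfELP V F) I }.ncard =
      { M : Set α | IsCnfModel V F M }.ncard := by
  have hinj : Set.InjOn (assignWVI V) {M | IsCnfModel V F M} := (assignWVI_injective V).injOn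
  have hbij : Set.BijOn (assignWVI V) {M | IsCnfModel V F M}
      {I | IsWVI V I ∧ PlausibleFor (cnfELP V F) I} := by
    refine ⟨fun M ⟨hMV, hsat⟩ => ⟨isWVI_assignWVI hMV, ?_⟩, hinj, ?_⟩
    · exact (plausibleFor_cnfELP_iff V F _).mpr ⟨assignWVI_total V M,
        fun c hc => (clause_sat_iff_mem_assignWVI (hFV c hc)).mp (hsat c hc)⟩
    · rintro I ⟨hI, hplaus⟩
      obtain ⟨htot, hcl⟩ := (plausibleFor_cnfELP_iff V F I).mp hplaus
      have hIM := assignWVI_eq_of_isWVI hI htot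
      refine ⟨{a | (a, true) ∈ I}, ⟨fun a ha => hI.1 _ ha, fun c hc => ?_⟩, hIM⟩
      exact (clause_sat_iff_mem_assignWVI (hFV c hc)).mpr (by rw [hIM]; exact hcl c hc)
  exact ⟨hbij, hbij.image_eq ▸ hinj.ncard_image⟩

/-- The map `M ↦ I_M` is a bijection from the models of `F` onto the
    plausible WVIs of `Π_F` over `V`; in particular the number of plausible WVIs of
    `Π_F` over `V` equals the number of models of `F`. -/
theorem cnf_reduction_bijection (V : Set α) (hV : V.Finite)
    (F : Set (Clause α)) (hF : F.Finite) (hFV : ∀ c ∈ F, clauseAtoms c ⊆ V) :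
    Set.BijOn (fun M => assignWVI V M)
      { M : Set α | IsCnfModel V F M }
      { I : Set (Lit α) | IsWVI V I ∧ PlausibleFor (cnfELP V F) I } ∧
    { I : Set (Lit α) | IsWVI V I ∧ PlausibleFor (cnfELP V F) I }.ncard =
      { M : Set α | IsCnfModel V F M }.ncard :=
  cnf_reduction_bijection_general V F hFV

end ELP
end

section
/- Product decomposition of plausible-WVI counts (correctness of the join step): Let Π_1 and Π_2 be ELPs, let X = ex-ats(Π_1) ∩ ex-ats(Π_2), and let J be a WVI over X. Then the map I ↦ (I|ex-ats(Π_1), I|ex-ats(Π_2)) is a bijection between {I : I a WVI over ex-ats(Π_1) ∪ ex-ats(Π_2), I|X = J, I ⊨_p Π_1 ∪ Π_2} and the set of pairs (I_1, I_2) with I_i a WVI over ex-ats(Π_i), I_i|X = J and I_i ⊨_p Π_i for i = 1, 2. Consequently, the number of WVIs I over ex-ats(Π_1) ∪ ex-ats(Π_2) with I|X = J and I ⊨_p Π_1 ∪ Π_2 equals the product of the corresponding counts for Π_1 and Π_2. -/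
/- Formalization of epistemic logic programs (ELPs), following the paper
   "Utilizing Treewidth for Quantitative Reasoning on Epistemic Logic Programs". -/

namespace ELP

variable {α : Type}

/-! Well-formedness forces a purely-epistemic rule to have empty head and bodies, so whenever
it survives in the epistemic reduct it becomes the constraint `←`, which no interpretation
satisfies. Hence `I ⊨_p Π` iff no purely-epistemic rule of `Π` survives in `Π^I`: a condition
rule by rule, which splits over `Π₁ ∪ Π₂` and only reads `I|ex-ats(Π)`. What remains is the
gluing of WVIs: two WVIs agreeing on `X` have a consistent union, whose restrictions give them
back. -/

section Restrict

lemma mem_restrict {I : Set (Lit α)} {X : Set α} {l : Lit α} :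
    l ∈ restrict I X ↔ l ∈ I ∧ l.1 ∈ X := Iff.rfl

lemma restrict_restrict (I : Set (Lit α)) (A B : Set α) :
    restrict (restrict I A) B = restrict I (A ∩ B) := by
  ext l; simp only [mem_restrict, Set.mem_inter_iff, and_assoc]

lemma restrict_union (I1 I2 : Set (Lit α)) (A : Set α) :
    restrict (I1 ∪ I2) A = restrict I1 A ∪ restrict I2 A := by
  ext l; simp only [mem_restrict, Set.mem_union, or_and_right]

variable {A B : Set α} {I I1 I2 : Set (Lit α)}

lemma isWVI_restrict (h : IsWVI A I) (B : Set α) : IsWVI B (restrict I B) :=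
  ⟨fun _ hl => hl.2, fun a ha => h.2 a ⟨ha.1.1, ha.2.1⟩⟩

lemma IsWVI.restrict_eq_self (h : IsWVI A I) : restrict I A = I :=
  Set.sep_eq_self_iff_mem_true.mpr h.1

lemma IsWVI.restrict_union_restrict (h : IsWVI (A ∪ B) I) :
    restrict I A ∪ restrict I B = I := by
  ext l
  simp only [Set.mem_union, mem_restrict, ← and_or_left]
  exact and_iff_left_of_imp (h.1 l)

lemma restrict_union_eq_left (h1 : IsWVI A I1) (h2 : IsWVI B I2)
    (h : restrict I1 (A ∩ B) = restrict I2 (A ∩ B)) : restrict (I1 ∪ I2) A = I1 := by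
  rw [restrict_union, h1.restrict_eq_self, Set.union_eq_left]
  intro l ⟨hl, hlA⟩
  have hlX : l ∈ restrict I2 (A ∩ B) := ⟨hl, hlA, h2.1 l hl⟩
  exact (h ▸ hlX).1

lemma restrict_union_eq_right (h1 : IsWVI A I1) (h2 : IsWVI B I2)
    (h : restrict I1 (A ∩ B) = restrict I2 (A ∩ B)) : restrict (I1 ∪ I2) B = I2 := by
  rw [Set.union_comm]
  exact restrict_union_eq_left h2 h1 (by rw [Set.inter_comm, h])

/-- A clash between `I1` and `I2` sits over `A ∩ B`, where they agree, so it is a clash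
inside `I1`. -/
lemma IsWVI.union (h1 : IsWVI A I1) (h2 : IsWVI B I2)
    (h : restrict I1 (A ∩ B) = restrict I2 (A ∩ B)) : IsWVI (A ∪ B) (I1 ∪ I2) := by
  have hI1 := restrict_union_eq_left h1 h2 h
  have hI2 := restrict_union_eq_right h1 h2 h
  refine ⟨fun l hl => hl.elim (Or.inl ∘ h1.1 l) (Or.inr ∘ h2.1 l), fun a ⟨ht, hf⟩ => ?_⟩
  rcases ht with ht | ht
  · refine h1.2 a ⟨ht, ?_⟩
    rw [← hI1]
    exact ⟨hf, h1.1 (a, true) ht⟩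
  · refine h2.2 a ⟨ht, ?_⟩
    rw [← hI2]
    exact ⟨hf, h2.1 (a, true) ht⟩

theorem bijOn_restrict_pair (J : Set (Lit α)) {r p q : Set (Lit α) → Prop}
    (hr : ∀ I, r I ↔ p (restrict I A) ∧ q (restrict I B)) :
    Set.BijOn (fun I => (restrict I A, restrict I B))
      { I | IsWVI (A ∪ B) I ∧ restrict I (A ∩ B) = J ∧ r I }
      ({ I1 | IsWVI A I1 ∧ restrict I1 (A ∩ B) = J ∧ p I1 } ×ˢ
       { I2 | IsWVI B I2 ∧ restrict I2 (A ∩ B) = J ∧ q I2 }) := by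
  refine ⟨?mapsTo, ?injOn, ?surjOn⟩
  case mapsTo =>
    rintro I ⟨hI, rfl, hrI⟩
    have ⟨hp, hq⟩ := (hr I).mp hrI
    refine ⟨⟨isWVI_restrict hI A, ?_, hp⟩, ⟨isWVI_restrict hI B, ?_, hq⟩⟩
    · rw [restrict_restrict, Set.inter_eq_right.mpr Set.inter_subset_left]
    · rw [restrict_restrict, Set.inter_eq_right.mpr Set.inter_subset_right]
  case injOn =>
    rintro I ⟨hI, -⟩ I' ⟨hI', -⟩ heq
    obtain ⟨hA, hB⟩ := Prod.mk.inj heq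
    rw [← IsWVI.restrict_union_restrict hI, ← IsWVI.restrict_union_restrict hI', hA, hB]
  case surjOn =>
    rintro ⟨I1, I2⟩ ⟨⟨h1, hJ1, hp⟩, ⟨h2, hJ2, hq⟩⟩
    have hagree : restrict I1 (A ∩ B) = restrict I2 (A ∩ B) := hJ1.trans hJ2.symm
    have hA := restrict_union_eq_left h1 h2 hagree
    have hB := restrict_union_eq_right h1 h2 hagree
    refine ⟨I1 ∪ I2, ⟨IsWVI.union h1 h2 hagree, ?_, (hr _).mpr ⟨hA ▸ hp, hB ▸ hq⟩⟩, ?_⟩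
    · rw [restrict_union, hJ1, hJ2, Set.union_self]
    · simp only [hA, hB]

end Restrict

section Plausibility

lemma answerSets_empty : answerSets (∅ : Set (PRule α)) = {∅} := by
  have hgl : ∀ I : Set α, glReduct (∅ : Set (PRule α)) I = ∅ := fun I => by
    ext; simp [glReduct]
  ext I
  simp only [answerSets, IsAnswerSet, Set.mem_ofPred_eq, hgl, Set.mem_singleton_iff]
  constructor
  · rintro ⟨-, hmin⟩
    exact (hmin ∅ (Set.empty_subset I) (fun _ hr => hr.elim)).symm
  · rintro rfl
    exact ⟨fun _ hr => hr.elim, fun _ hK _ => Set.subset_empty_iff.mp hK⟩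

lemma answerSets_eq_empty_of_mem {P : Set (PRule α)} {r : PRule α} (hr : r ∈ P)
    (hhead : r.head = ∅) (hbpos : r.bpos = ∅) (hbneg : r.bneg = ∅) : answerSets P = ∅ := by
  refine Set.eq_empty_of_forall_notMem fun I hI => ?_
  have hred : (⟨r.head, r.bpos, ∅⟩ : PRule α) ∈ glReduct P I :=
    ⟨r, hr, by simp [hbneg], rfl⟩
  rcases hI.1 _ hred with h | h
  · simp [hhead] at h
  · exact h (hbpos ▸ Set.empty_subset I)

lemma ERule.Wf.head_union_bpos_union_bneg_eq_empty {r : ERule α} (hwf : r.Wf)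
    (hpe : r.PurelyEpistemic) : r.head ∪ r.bpos ∪ r.bneg = ∅ := by
  have hsub : r.head ∪ r.bpos ∪ r.bneg ⊆ r.exats := fun a ha => by
    by_contra hne
    exact Set.eq_empty_iff_forall_notMem.mp hpe a ⟨Or.inl ha, hne⟩
  exact (Set.inter_eq_left.mpr hsub).symm.trans hwf.1

lemma plausibleFor_iff_ereduct_peParts_eq_empty {P : Set (ERule α)} (hwf : WfELP P)
    (I : Set (Lit α)) : PlausibleFor P I ↔ ereduct (peParts P) I = ∅ := by
  refine ⟨fun hpl => Set.eq_empty_of_forall_notMem ?_, fun he => ?_⟩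
  · rintro _ hmem
    obtain ⟨r, hr, -, -, rfl⟩ := id hmem
    have hempty := (hwf r hr.1).head_union_bpos_union_bneg_eq_empty hr.2
    simp only [Set.union_empty_iff] at hempty
    obtain ⟨⟨hhead, hbpos⟩, hbneg⟩ := hempty
    rw [PlausibleFor, answerSets_eq_empty_of_mem hmem hhead hbpos hbneg] at hpl
    exact Set.not_nonempty_empty hpl
  · rw [PlausibleFor, he, answerSets_empty]
    exact Set.singleton_nonempty ∅

lemma peParts_union (P1 P2 : Set (ERule α)) :
    peParts (P1 ∪ P2) = peParts P1 ∪ peParts P2 :=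
  Set.sep_union

lemma ereduct_union (Q1 Q2 : Set (ERule α)) (I : Set (Lit α)) :
    ereduct (Q1 ∪ Q2) I = ereduct Q1 I ∪ ereduct Q2 I := by
  ext
  simp only [ereduct, Set.mem_ofPred_eq, Set.mem_union, or_and_right, exists_or]

lemma plausibleFor_union {P1 P2 : Set (ERule α)} (hwf1 : WfELP P1) (hwf2 : WfELP P2)
    (I : Set (Lit α)) :
    PlausibleFor (P1 ∪ P2) I ↔ PlausibleFor P1 I ∧ PlausibleFor P2 I := by
  have hwf : WfELP (P1 ∪ P2) := fun r hr => hr.elim (hwf1 r) (hwf2 r)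
  rw [plausibleFor_iff_ereduct_peParts_eq_empty hwf,
    plausibleFor_iff_ereduct_peParts_eq_empty hwf1,
    plausibleFor_iff_ereduct_peParts_eq_empty hwf2, peParts_union, ereduct_union,
    Set.union_empty_iff]

lemma ereduct_restrict {P : Set (ERule α)} {A : Set α} (h : elpExats P ⊆ A)
    (I : Set (Lit α)) : ereduct P (restrict I A) = ereduct P I := by
  have hA : ∀ r ∈ P, ∀ l ∈ r.epos ∪ r.eneg, l.1 ∈ A := fun r hr l hl =>
    h (Set.mem_biUnion hr ⟨l, hl, rfl⟩)
  ext
  constructor <;> rintro ⟨r, hr, hpos, hneg, rfl⟩ <;> refine ⟨r, hr, ?_, ?_, rfl⟩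
  · exact fun l hl hlI => hpos l hl ⟨hlI, hA r hr l (Or.inl hl)⟩
  · exact fun l hl => (hneg l hl).1
  · exact fun l hl hlI => hpos l hl hlI.1
  · exact fun l hl => ⟨hneg l hl, hA r hr l (Or.inr hl)⟩

lemma elpExats_peParts_subset (P : Set (ERule α)) : elpExats (peParts P) ⊆ elpExats P :=
  Set.biUnion_subset_biUnion_left (Set.sep_subset P _)

lemma plausibleFor_restrict {P : Set (ERule α)} {A : Set α} (h : elpExats P ⊆ A)
    (I : Set (Lit α)) : PlausibleFor P (restrict I A) ↔ PlausibleFor P I := by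
  rw [PlausibleFor, PlausibleFor, ereduct_restrict ((elpExats_peParts_subset P).trans h)]

end Plausibility

theorem join_product_decomposition_general (P1 P2 : Set (ERule α))
    (hwf1 : WfELP P1) (hwf2 : WfELP P2)
    (J : Set (Lit α)) :
    Set.BijOn
      (fun I => (restrict I (elpExats P1), restrict I (elpExats P2)))
      { I : Set (Lit α) | IsWVI (elpExats P1 ∪ elpExats P2) I ∧
          restrict I (elpExats P1 ∩ elpExats P2) = J ∧ PlausibleFor (P1 ∪ P2) I }
      ({ I1 : Set (Lit α) | IsWVI (elpExats P1) I1 ∧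
          restrict I1 (elpExats P1 ∩ elpExats P2) = J ∧ PlausibleFor P1 I1 } ×ˢ
       { I2 : Set (Lit α) | IsWVI (elpExats P2) I2 ∧
          restrict I2 (elpExats P1 ∩ elpExats P2) = J ∧ PlausibleFor P2 I2 }) ∧
    { I : Set (Lit α) | IsWVI (elpExats P1 ∪ elpExats P2) I ∧
        restrict I (elpExats P1 ∩ elpExats P2) = J ∧
        PlausibleFor (P1 ∪ P2) I }.ncard =
      { I1 : Set (Lit α) | IsWVI (elpExats P1) I1 ∧
          restrict I1 (elpExats P1 ∩ elpExats P2) = J ∧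
          PlausibleFor P1 I1 }.ncard *
      { I2 : Set (Lit α) | IsWVI (elpExats P2) I2 ∧
          restrict I2 (elpExats P1 ∩ elpExats P2) = J ∧
          PlausibleFor P2 I2 }.ncard := by
  have hbij := bijOn_restrict_pair (A := elpExats P1) (B := elpExats P2) J
    (r := PlausibleFor (P1 ∪ P2)) (p := PlausibleFor P1) (q := PlausibleFor P2) fun I => by
    rw [plausibleFor_union hwf1 hwf2, plausibleFor_restrict subset_rfl,
      plausibleFor_restrict subset_rfl]
  exact ⟨hbij, hbij.ncard_eq.trans Set.ncard_prod⟩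

/-- Product decomposition of plausible-WVI counts (correctness of
    the join step): the map `I ↦ (I|ex-ats(Π₁), I|ex-ats(Π₂))` is a bijection between
    the WVIs `I` over `ex-ats(Π₁) ∪ ex-ats(Π₂)` with `I|X = J` and `I ⊨_p Π₁ ∪ Π₂`
    (where `X = ex-ats(Π₁) ∩ ex-ats(Π₂)`) and the pairs of corresponding WVIs for
    `Π₁` and `Π₂`; consequently the count for the union is the product of the counts. -/
theorem join_product_decomposition (P1 P2 : Set (ERule α))
    (hwf1 : WfELP P1) (hwf2 : WfELP P2)
    (hfin1 : (elpExats P1).Finite) (hfin2 : (elpExats P2).Finite)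
    (J : Set (Lit α)) (hJ : IsWVI (elpExats P1 ∩ elpExats P2) J) :
    Set.BijOn
      (fun I => (restrict I (elpExats P1), restrict I (elpExats P2)))
      { I : Set (Lit α) | IsWVI (elpExats P1 ∪ elpExats P2) I ∧
          restrict I (elpExats P1 ∩ elpExats P2) = J ∧ PlausibleFor (P1 ∪ P2) I }
      ({ I1 : Set (Lit α) | IsWVI (elpExats P1) I1 ∧
          restrict I1 (elpExats P1 ∩ elpExats P2) = J ∧ PlausibleFor P1 I1 } ×ˢ
       { I2 : Set (Lit α) | IsWVI (elpExats P2) I2 ∧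
          restrict I2 (elpExats P1 ∩ elpExats P2) = J ∧ PlausibleFor P2 I2 }) ∧
    { I : Set (Lit α) | IsWVI (elpExats P1 ∪ elpExats P2) I ∧
        restrict I (elpExats P1 ∩ elpExats P2) = J ∧
        PlausibleFor (P1 ∪ P2) I }.ncard =
      { I1 : Set (Lit α) | IsWVI (elpExats P1) I1 ∧
          restrict I1 (elpExats P1 ∩ elpExats P2) = J ∧
          PlausibleFor P1 I1 }.ncard *
      { I2 : Set (Lit α) | IsWVI (elpExats P2) I2 ∧
          restrict I2 (elpExats P1 ∩ elpExats P2) = J ∧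
          PlausibleFor P2 I2 }.ncard :=
  join_product_decomposition_general P1 P2 hwf1 hwf2 J

end ELP
end
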